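/- Let X ~ P and Y ~ Q be real random variables with absolutely continuous unimodal distributions supported on intervals, with unique modes mode(X) and mode(Y). If X ≤_c Y in the convex transform order, then P(X ≥ mode(X)) ≤ P(Y ≥ mode(Y)). -/

import Mathlib

open MeasureTheory ProbabilityTheory Set

/-!
With `F, G` the cdfs, `f, g` the densities and `φ = G⁻¹ ∘ F`, the identity `G ∘ φ = F` turns
every increment into `f(ξ) Δx = g(η) Δφ`: the slopes of `φ` are ratios of `f` to `g ∘ φ`, and
convexity makes them nondecreasing. If `F(mP) < G(mQ)` then `φ(mP) < mQ`, and since the mode of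
`g` is unique, `g ≤ K < g(mQ)` on some `[φ(mP), ŷ]` with `ŷ < mQ`. Just right of `mP` the slopes
of `φ` are then roughly at least `f(mP) / K`, while where `φ` is close to `mQ` they are roughly at
most `f(mP) / g(mQ)`, a contradiction. Hence `G(mQ) ≤ F(mP)`, which is the claim as neither
distribution has atoms.
-/

section ContinuousDensity

variable {M : Measure ℝ} [IsProbabilityMeasure M] {p : ℝ → ℝ}

lemma cdf_sub_cdf_eq_integral (hp : Continuous p)
    (hd : M = volume.withDensity fun x => ENNReal.ofReal (p x)) {a b : ℝ} (hab : a ≤ b) :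
    cdf M b - cdf M a = ∫ t in a..b, max (p t) 0 := by
  rw [← ENNReal.ofReal_eq_ofReal_iff (sub_nonneg.2 (monotone_cdf M hab))
      (intervalIntegral.integral_nonneg hab fun t _ => le_max_right _ _),
    ← StieltjesFunction.measure_Ioc, measure_cdf, intervalIntegral.integral_of_le hab,
    ofReal_integral_eq_lintegral_ofReal
      ((hp.max continuous_const).integrableOn_Icc.mono_set Ioc_subset_Icc_self)
      (ae_of_all _ fun t => le_max_right (p t) 0), hd, withDensity_apply _ measurableSet_Ioc]
  simp [ENNReal.ofReal_max]

lemma hasDerivAt_cdf_of_withDensity (hp : Continuous p)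
    (hd : M = volume.withDensity fun x => ENNReal.ofReal (p x)) (x : ℝ) :
    HasDerivAt (cdf M) (max (p x) 0) x := by
  have hcdf : ⇑(cdf M) = fun y => cdf M 0 + ∫ t in 0..y, max (p t) 0 := by
    funext y
    rcases le_total 0 y with h | h
    · linarith [cdf_sub_cdf_eq_integral hp hd h]
    · rw [intervalIntegral.integral_symm]
      linarith [cdf_sub_cdf_eq_integral hp hd h]
  rw [hcdf]
  exact ((hp.max continuous_const).integral_hasStrictDerivAt 0 x).hasDerivAt.const_add _

lemma continuous_cdf_of_withDensity (hp : Continuous p)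
    (hd : M = volume.withDensity fun x => ENNReal.ofReal (p x)) : Continuous (cdf M) :=
  continuous_iff_continuousAt.2 fun x => (hasDerivAt_cdf_of_withDensity hp hd x).continuousAt

lemma mul_sub_le_cdf_sub_cdf (hp : Continuous p)
    (hd : M = volume.withDensity fun x => ENNReal.ofReal (p x)) {a b α : ℝ} (hab : a ≤ b)
    (hα : ∀ t ∈ Ioo a b, α ≤ p t) : α * (b - a) ≤ cdf M b - cdf M a := by
  have hD := hasDerivAt_cdf_of_withDensity hp hd
  refine (convex_Icc a b).mul_sub_le_image_sub_of_le_deriv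
    (continuous_cdf_of_withDensity hp hd).continuousOn
    (fun x _ => (hD x).differentiableAt.differentiableWithinAt) (fun t ht => ?_)
    a (left_mem_Icc.2 hab) b (right_mem_Icc.2 hab) hab
  rw [(hD t).deriv]
  exact (hα t (by rwa [interior_Icc] at ht)).trans (le_max_left _ _)

lemma cdf_sub_cdf_le_mul_sub (hp : Continuous p)
    (hd : M = volume.withDensity fun x => ENNReal.ofReal (p x)) {a b α : ℝ} (hab : a ≤ b)
    (hα₀ : 0 ≤ α) (hα : ∀ t ∈ Ioo a b, p t ≤ α) : cdf M b - cdf M a ≤ α * (b - a) := by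
  have hD := hasDerivAt_cdf_of_withDensity hp hd
  refine (convex_Icc a b).image_sub_le_mul_sub_of_deriv_le
    (continuous_cdf_of_withDensity hp hd).continuousOn
    (fun x _ => (hD x).differentiableAt.differentiableWithinAt) (fun t ht => ?_)
    a (left_mem_Icc.2 hab) b (right_mem_Icc.2 hab) hab
  rw [(hD t).deriv]
  exact max_le (hα t (by rwa [interior_Icc] at ht)) hα₀

lemma cdf_lt_cdf_of_pos (hp : Continuous p)
    (hd : M = volume.withDensity fun x => ENNReal.ofReal (p x)) {a b : ℝ} (hab : a < b)
    (hpos : ∀ t ∈ Ioo a b, 0 < p t) : cdf M a < cdf M b := by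
  have hD := hasDerivAt_cdf_of_withDensity hp hd
  exact strictMonoOn_of_hasDerivWithinAt_pos (convex_Icc a b)
    (continuous_cdf_of_withDensity hp hd).continuousOn (fun x _ => (hD x).hasDerivWithinAt)
    (fun t ht => lt_max_of_lt_left (hpos t (by rwa [interior_Icc] at ht)))
    (left_mem_Icc.2 hab.le) (right_mem_Icc.2 hab.le) hab

lemma cdf_pos_of_pos (hp : Continuous p)
    (hd : M = volume.withDensity fun x => ENNReal.ofReal (p x)) {m : ℝ} (hm : 0 < p m) :
    0 < cdf M m := by
  obtain ⟨l, r, ⟨hl, hr⟩, hpos⟩ :=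
    mem_nhds_iff_exists_Ioo_subset.1 ((hp.tendsto m).eventually_const_lt hm)
  exact (cdf_nonneg M l).trans_lt
    (cdf_lt_cdf_of_pos hp hd hl fun t ht => hpos ⟨ht.1, ht.2.trans hr⟩)

lemma exists_band_mul_sub_le_cdf_sub_cdf (hp : Continuous p)
    (hd : M = volume.withDensity fun x => ENNReal.ofReal (p x)) {m α : ℝ} (hα : 0 < α)
    (hαm : α < p m) :
    ∃ w₁ w₂, w₁ < cdf M m ∧ cdf M m < w₂ ∧ ∀ y y', y ≤ y' → w₁ < cdf M y → cdf M y' < w₂ →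
      α * (y' - y) ≤ cdf M y' - cdf M y := by
  obtain ⟨l, r, ⟨hl, hr⟩, hlr⟩ :=
    mem_nhds_iff_exists_Ioo_subset.1 ((hp.tendsto m).eventually_const_lt hαm)
  refine ⟨cdf M l, cdf M r,
    cdf_lt_cdf_of_pos hp hd hl fun t ht => hα.trans (hlr ⟨ht.1, ht.2.trans hr⟩),
    cdf_lt_cdf_of_pos hp hd hr fun t ht => hα.trans (hlr ⟨hl.trans ht.1, ht.2⟩),
    fun y y' hyy' hy hy' => mul_sub_le_cdf_sub_cdf hp hd hyy' fun t ht => (hlr ?_).le⟩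
  exact ⟨((monotone_cdf M).reflect_lt hy).trans ht.1, ht.2.trans ((monotone_cdf M).reflect_lt hy')⟩

end ContinuousDensity

section Support

variable {M : Measure ℝ} {J : Set ℝ}

lemma mem_of_cdf_mem_Ioo [IsProbabilityMeasure M] (hJ : J.OrdConnected) (hMJ : M J = 1) {y : ℝ}
    (hy : cdf M y ∈ Ioo 0 1) : y ∈ J := by
  by_contra hyJ
  have hside : (∀ z ∈ J, z < y) ∨ ∀ z ∈ J, y < z := by
    by_contra! h
    obtain ⟨⟨a, ha, hay⟩, b, hb, hby⟩ := h
    exact hyJ (hJ.out hb ha ⟨hby, hay⟩)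
  rcases hside with hlt | hgt
  · have hIic : M (Iic y) = 1 :=
      le_antisymm prob_le_one (hMJ ▸ measure_mono fun z hz => (hlt z hz).le)
    rw [← ofReal_cdf, ENNReal.ofReal_eq_one] at hIic
    exact hy.2.ne hIic
  · have hIic : M (Iic y) = 0 := measure_mono_null (fun z hz hzJ => (hgt z hzJ).not_ge hz)
      ((prob_compl_eq_zero_iff hJ.measurableSet).2 hMJ)
    rw [← ofReal_cdf, ENNReal.ofReal_eq_zero] at hIic
    exact hIic.not_gt hy.1

lemma exists_cdf_eq (hM : Continuous (cdf M)) {v : ℝ} (hv : v ∈ Ioo 0 1) :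
    ∃ y, cdf M y = v := by
  obtain ⟨a, ha⟩ := ((tendsto_cdf_atBot M).eventually_lt_const hv.1).exists
  obtain ⟨b, hb⟩ := ((tendsto_cdf_atTop M).eventually_const_lt hv.2).exists
  exact intermediate_value_univ a b hM ⟨ha.le, hb.le⟩

lemma exists_mem_gt_cdf_eq [IsProbabilityMeasure M] (hM : Continuous (cdf M))
    (hJ : J.OrdConnected) (hMJ : M J = 1) {x₀ v : ℝ} (hv : v ∈ Ioo (cdf M x₀) 1) :
    ∃ x ∈ J, x₀ < x ∧ cdf M x = v := by
  have hv₀ : v ∈ Ioo 0 1 := ⟨(cdf_nonneg M x₀).trans_lt hv.1, hv.2⟩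
  obtain ⟨x, hx⟩ := exists_cdf_eq hM hv₀
  exact ⟨x, mem_of_cdf_mem_Ioo hJ hMJ (hx ▸ hv₀), (monotone_cdf M).reflect_lt (hx ▸ hv.1), hx⟩

end Support

lemma pos_of_measure_ne_zero_of_forall_ne_lt {M : Measure ℝ} {p : ℝ → ℝ}
    (hd : M = volume.withDensity fun x => ENNReal.ofReal (p x))
    {S : Set ℝ} (hS : MeasurableSet S) (hMS : M S ≠ 0) {m : ℝ}
    (hm : ∀ x ∈ S, x ≠ m → p x < p m) : 0 < p m := by
  obtain ⟨x, hxS, hx⟩ : ∃ x ∈ S, 0 < p x := by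
    by_contra! h
    refine hMS ?_
    rw [hd, withDensity_apply _ hS, setLIntegral_congr_fun hS fun x hx =>
      ENNReal.ofReal_eq_zero.2 (h x hx)]
    simp
  rcases eq_or_ne x m with rfl | hxm
  · exact hx
  · exact hx.trans (hm x hxS hxm)

lemma measure_Ici_le_of_cdf_le {M N : Measure ℝ} [IsProbabilityMeasure M]
    [IsProbabilityMeasure N] [NullSingletonClass M] [NullSingletonClass N] {m n : ℝ}
    (h : cdf N n ≤ cdf M m) : M (Ici m) ≤ N (Ici n) := by
  simp only [← measure_congr Ioi_ae_eq_Ici, ← compl_Iic,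
    prob_compl_eq_one_sub measurableSet_Iic, ← ofReal_cdf]
  exact tsub_le_tsub_left (ENNReal.ofReal_le_ofReal h) 1

lemma ConvexOn.mul_le_mul_of_increment_bounds {s : Set ℝ} {φ : ℝ → ℝ} (hφ : ConvexOn ℝ s φ)
    {a b c d α β α' κ : ℝ} (ha : a ∈ s) (hb : b ∈ s) (hc : c ∈ s) (hd : d ∈ s)
    (hab : a < b) (hbc : b < c) (hcd : c < d) (hκ : 0 ≤ κ) (hβ : 0 ≤ β)
    (h₁ : α * (b - a) ≤ κ * (φ b - φ a)) (h₂ : β * (φ d - φ c) ≤ α' * (d - c)) :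
    α * β ≤ α' * κ := by
  have hslope := (hφ.slope_mono_adjacent ha hc hab hbc).trans
    (hφ.slope_mono_adjacent hb hd hbc hcd)
  have h₁' : α ≤ κ * ((φ b - φ a) / (b - a)) := by
    rw [mul_div_assoc', le_div_iff₀ (sub_pos.2 hab)]; exact h₁
  have h₂' : β * ((φ d - φ c) / (d - c)) ≤ α' := by
    rw [mul_div_assoc', div_le_iff₀ (sub_pos.2 hcd)]; exact h₂
  calc α * β ≤ κ * ((φ b - φ a) / (b - a)) * β := mul_le_mul_of_nonneg_right h₁' hβ
    _ ≤ κ * ((φ d - φ c) / (d - c)) * β := by gcongr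
    _ ≤ α' * κ := by nlinarith

/-- `G⁻¹ ∘ F` for the cdfs `F, G` of `P, Q`; `invFun` inverts `cdf Q` only at levels it attains. -/
noncomputable def cdfTransform (P Q : Measure ℝ) (x : ℝ) : ℝ :=
  Function.invFun (cdf Q) (cdf P x)

lemma cdf_cdfTransform {P Q : Measure ℝ} (hQ : Continuous (cdf Q))
    {x : ℝ} (hx : cdf P x ∈ Ioo 0 1) : cdf Q (cdfTransform P Q x) = cdf P x :=
  Function.invFun_eq (exists_cdf_eq hQ hx)

theorem mul_le_mul_of_convexOn_cdfTransform {P Q : Measure ℝ} [IsProbabilityMeasure P]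
    [IsProbabilityMeasure Q] {I : Set ℝ} (hI : I.OrdConnected) (hPI : P I = 1) {f g : ℝ → ℝ}
    (hf : Continuous f) (hg : Continuous g)
    (hPd : P = volume.withDensity fun x => ENNReal.ofReal (f x))
    (hQd : Q = volume.withDensity fun x => ENNReal.ofReal (g x))
    (hc : ConvexOn ℝ I (cdfTransform P Q))
    {x₀ y₀ ŷ α β A K : ℝ} (hx₀ : x₀ ∈ I) (hu : 0 < cdf P x₀) (hŷ : cdf P x₀ < cdf Q ŷ)
    (hŷy₀ : cdf Q ŷ < cdf Q y₀) (hα : 0 < α) (hαf : α < f x₀) (hβ : 0 < β) (hβg : β < g y₀)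
    (hfA : ∀ x ∈ I, f x ≤ A) (hK : 0 ≤ K) (hgK : ∀ y ∈ Ioo (cdfTransform P Q x₀) ŷ, g y ≤ K) :
    α * β ≤ A * K := by
  set φ := cdfTransform P Q
  have hG₁ := cdf_le_one Q y₀
  have hφ : ∀ x, cdf P x ∈ Ioo 0 1 → cdf Q (φ x) = cdf P x :=
    fun _ => cdf_cdfTransform (continuous_cdf_of_withDensity hg hQd)
  have hFc := continuous_cdf_of_withDensity hf hPd
  obtain ⟨w₁, w₂, hw₁, hw₂, hPband⟩ := exists_band_mul_sub_le_cdf_sub_cdf hf hPd hα hαf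
  obtain ⟨w₁', w₂', hw₁', hw₂', hQband⟩ := exists_band_mul_sub_le_cdf_sub_cdf hg hQd hβ hβg
  obtain ⟨v₁, hv₁, hv₁'⟩ := exists_between (lt_min hw₂ hŷ)
  rw [lt_min_iff] at hv₁'
  obtain ⟨v₂, hv₂, hv₂'⟩ := exists_between (max_lt (hv₁'.2.trans hŷy₀) hw₁')
  rw [max_lt_iff] at hv₂
  obtain ⟨v₃, hv₃, hv₃'⟩ := exists_between hv₂'
  obtain ⟨x₁, hx₁I, h₀₁, hx₁⟩ :=
    exists_mem_gt_cdf_eq hFc hI hPI (x₀ := x₀) (v := v₁) ⟨hv₁, by linarith⟩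
  obtain ⟨x₂, hx₂I, -, hx₂⟩ :=
    exists_mem_gt_cdf_eq hFc hI hPI (x₀ := x₀) (v := v₂) ⟨by linarith, by linarith⟩
  obtain ⟨x₃, hx₃I, -, hx₃⟩ :=
    exists_mem_gt_cdf_eq hFc hI hPI (x₀ := x₀) (v := v₃) ⟨by linarith, by linarith⟩
  have h₁₂ : x₁ < x₂ := (monotone_cdf P).reflect_lt (by linarith)
  have h₂₃ : x₂ < x₃ := (monotone_cdf P).reflect_lt (by linarith)
  have hφ₀ := hφ x₀ ⟨hu, by linarith⟩
  have hφ₁ := hφ x₁ ⟨by linarith, by linarith⟩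
  have hφ₂ := hφ x₂ ⟨by linarith, by linarith⟩
  have hφ₃ := hφ x₃ ⟨by linarith, by linarith⟩
  have hslope₁ : α * (x₁ - x₀) ≤ K * (φ x₁ - φ x₀) := calc
    α * (x₁ - x₀) ≤ cdf P x₁ - cdf P x₀ := hPband x₀ x₁ h₀₁.le hw₁ (by linarith)
    _ = cdf Q (φ x₁) - cdf Q (φ x₀) := by rw [hφ₀, hφ₁]
    _ ≤ K * (φ x₁ - φ x₀) := cdf_sub_cdf_le_mul_sub hg hQd
        ((monotone_cdf Q).reflect_lt (by linarith)).le hK fun y hy =>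
        hgK y ⟨hy.1, hy.2.trans ((monotone_cdf Q).reflect_lt (by linarith))⟩
  have hslope₂ : β * (φ x₃ - φ x₂) ≤ A * (x₃ - x₂) := calc
    β * (φ x₃ - φ x₂) ≤ cdf Q (φ x₃) - cdf Q (φ x₂) := hQband _ _
        ((monotone_cdf Q).reflect_lt (by linarith)).le (by linarith) (by linarith)
    _ = cdf P x₃ - cdf P x₂ := by rw [hφ₂, hφ₃]
    _ ≤ A * (x₃ - x₂) := cdf_sub_cdf_le_mul_sub hf hPd h₂₃.le
        ((hα.trans hαf).le.trans (hfA x₀ hx₀)) fun x hx =>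
        hfA x (hI.out hx₂I hx₃I (Ioo_subset_Icc_self hx))
  exact hc.mul_le_mul_of_increment_bounds hx₀ hx₁I hx₂I hx₃I h₀₁ h₁₂ h₂₃ hK hβ.le hslope₁ hslope₂

theorem cdf_le_cdf_of_convexOn_cdfTransform {P Q : Measure ℝ} [IsProbabilityMeasure P]
    [IsProbabilityMeasure Q] {I J : Set ℝ} (hI : I.OrdConnected) (hJ : J.OrdConnected)
    (hPI : P I = 1) (hQJ : Q J = 1) {f g : ℝ → ℝ} (hf : Continuous f) (hg : Continuous g)
    (hPd : P = volume.withDensity fun x => ENNReal.ofReal (f x))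
    (hQd : Q = volume.withDensity fun x => ENNReal.ofReal (g x))
    (hc : ConvexOn ℝ I (cdfTransform P Q))
    {mP mQ : ℝ} (hmP : mP ∈ I) (hmQ : mQ ∈ J) (hA : 0 < f mP) (hB : 0 < g mQ)
    (hfmax : ∀ x ∈ I, x ≠ mP → f x < f mP) (hgmax : ∀ y ∈ J, y ≠ mQ → g y < g mQ) :
    cdf Q mQ ≤ cdf P mP := by
  by_contra! hlt
  have hGc := continuous_cdf_of_withDensity hg hQd
  have hu := cdf_pos_of_pos hf hPd hA
  have hlevel : cdf P mP ∈ Ioo 0 1 := ⟨hu, hlt.trans_le (cdf_le_one Q mQ)⟩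
  have hGy₀ := cdf_cdfTransform hGc hlevel
  have hy₀J := mem_of_cdf_mem_Ioo hJ hQJ (by rwa [hGy₀])
  obtain ⟨ŷ, hGŷ⟩ := exists_cdf_eq hGc (v := (cdf P mP + cdf Q mQ) / 2)
    ⟨by linarith, by linarith [cdf_le_one Q mQ]⟩
  have hy₀ŷ : cdfTransform P Q mP < ŷ := (monotone_cdf Q).reflect_lt (by linarith)
  have hŷmQ : ŷ < mQ := (monotone_cdf Q).reflect_lt (by linarith)
  obtain ⟨y, hy, hyK⟩ := isCompact_Icc.exists_isMaxOn (nonempty_Icc.2 hy₀ŷ.le)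
    (f := fun t => max (g t) 0) (hg.max continuous_const).continuousOn
  have hKB : max (g y) 0 < g mQ :=
    max_lt (hgmax y (hJ.out hy₀J hmQ ⟨hy.1, hy.2.trans hŷmQ.le⟩) (hy.2.trans_lt hŷmQ).ne) hB
  have hK : 0 ≤ max (g y) 0 := le_max_right _ _
  obtain ⟨β, hKβ, hβ⟩ := exists_between hKB
  obtain ⟨α, hα, hαA⟩ :=
    exists_between ((div_lt_iff₀ (hK.trans_lt hKβ)).2 (mul_lt_mul_of_pos_left hKβ hA))
  have hfA : ∀ x ∈ I, f x ≤ f mP := fun x hx => by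
    rcases eq_or_ne x mP with rfl | h
    exacts [le_rfl, (hfmax x hx h).le]
  have hαβ := mul_le_mul_of_convexOn_cdfTransform hI hPI hf hg hPd hQd hc hmP hu
    (by linarith) (by linarith) ((div_nonneg (mul_nonneg hA.le hK) (hK.trans hKβ.le)).trans_lt hα)
    hαA (hK.trans_lt hKβ) hβ hfA hK
    fun t ht => (le_max_left _ _).trans (hyK (Ioo_subset_Icc_self ht))
  rw [div_lt_iff₀ (hK.trans_lt hKβ)] at hα
  linarith

theorem exceedance_of_mode_monotone_of_convex_order_general
    (P Q : Measure ℝ) [IsProbabilityMeasure P] [IsProbabilityMeasure Q]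
    (I J : Set ℝ) (hI : I.OrdConnected) (hJ : J.OrdConnected)
    (hPI : P I = 1) (hQJ : Q J = 1)
    (f g : ℝ → ℝ) (hf : Continuous f) (hg : Continuous g)
    (hPd : P = volume.withDensity (fun x => ENNReal.ofReal (f x)))
    (hQd : Q = volume.withDensity (fun x => ENNReal.ofReal (g x)))
    (mP mQ : ℝ)
    -- unique modes:
    (hmP : mP ∈ I ∧ ∀ x ∈ I, x ≠ mP → f x < f mP)
    (hmQ : mQ ∈ J ∧ ∀ x ∈ J, x ≠ mQ → g x < g mQ)
    -- convex transform order `X ≤_c Y`: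
    (hc : ConvexOn ℝ I (fun x => Function.invFun (fun y => cdf Q y) (cdf P x))) :
    P {x | mP ≤ x} ≤ Q {x | mQ ≤ x} := by
  obtain ⟨hmPI, hfmax⟩ := hmP
  obtain ⟨hmQJ, hgmax⟩ := hmQ
  have hA := pos_of_measure_ne_zero_of_forall_ne_lt hPd hI.measurableSet (by simp [hPI]) hfmax
  have hB := pos_of_measure_ne_zero_of_forall_ne_lt hQd hJ.measurableSet (by simp [hQJ]) hgmax
  have : NullSingletonClass P := hPd ▸ inferInstance
  have : NullSingletonClass Q := hQd ▸ inferInstance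
  exact measure_Ici_le_of_cdf_le (cdf_le_cdf_of_convexOn_cdfTransform hI hJ hPI hQJ hf hg hPd hQd
    hc hmPI hmQJ hA hB hfmax hgmax)

/-- Corollary 10 (modes): if `X ≤_c Y` for unimodal absolutely continuous
distributions, then `P(X ≥ mode X) ≤ P(Y ≥ mode Y)`. -/
theorem exceedance_of_mode_monotone_of_convex_order
    (P Q : Measure ℝ) [IsProbabilityMeasure P] [IsProbabilityMeasure Q]
    (I J : Set ℝ) (hI : I.OrdConnected) (hJ : J.OrdConnected)
    (hPI : P I = 1) (hQJ : Q J = 1)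
    (f g : ℝ → ℝ) (hf : Continuous f) (hg : Continuous g)
    (hPd : P = volume.withDensity (fun x => ENNReal.ofReal (f x)))
    (hQd : Q = volume.withDensity (fun x => ENNReal.ofReal (g x)))
    (mP mQ : ℝ)
    -- unique modes:
    (hmP : mP ∈ I ∧ ∀ x ∈ I, x ≠ mP → f x < f mP)
    (hmQ : mQ ∈ J ∧ ∀ x ∈ J, x ≠ mQ → g x < g mQ)
    (hF : StrictMonoOn (fun x => cdf P x) I)
    (hG : StrictMonoOn (fun x => cdf Q x) J)
    -- convex transform order `X ≤_c Y`:
    (hc : ConvexOn ℝ I (fun x => Function.invFun (fun y => cdf Q y) (cdf P x))) :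
    P {x | mP ≤ x} ≤ Q {x | mQ ≤ x} :=
  exceedance_of_mode_monotone_of_convex_order_general P Q I J hI hJ hPI hQJ f g hf hg hPd hQd mP mQ
    hmP hmQ hc
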